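/- The set of entire functions f : ℂ → ℂ which are algebraic (i.e. there exists a nonzero polynomial P ∈ ℂ[X,Y] with P(z, f(z)) = 0 for all z ∈ ℂ) and satisfy f(Q̄) ⊆ Q̄ is countable. -/

import Mathlib

/-!
An entire function `f` satisfying `P(z, f z) = 0` grows at most polynomially: at each point,
`f z` is a root of the one-variable polynomial `P(z, ·)`, so Cauchy's bound on its roots
controls `‖f z‖` by the coefficients of `P(z, ·)`, while the leading one stays away from zero
for large `‖z‖`. By the Cauchy estimates, the Taylor coefficients of `f` at `0` beyond that
growth order vanish, so `f` is a polynomial. A polynomial of degree at most `n` is determined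
by its values at `0, …, n`; if it maps algebraic numbers to algebraic numbers, these values
range over a countable set.
-/

open Polynomial Filter Asymptotics Bornology Topology

namespace Polynomial

lemma Bivariate.eval_equivMvPolynomial {R : Type*} [CommSemiring R] (x y : R)
    (p : R[X][X]) : MvPolynomial.eval ![x, y] (equivMvPolynomial R p) = p.evalEval x y := by
  suffices (MvPolynomial.eval ![x, y]).comp (equivMvPolynomial R).toRingHom =
      evalEvalRingHom x y from congr($this p)
  ext <;> simp

lemma countable_setOf_isAlgebraic_eval {K : Type*} [Field K] [CharZero K] :
    {p : K[X] | ∀ x, IsAlgebraic ℚ x → IsAlgebraic ℚ (p.eval x)}.Countable := by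
  let T (n : ℕ) : Set K[X] :=
    {p | p.natDegree ≤ n ∧ ∀ i : Fin (n + 1), IsAlgebraic ℚ (p.eval (i : K))}
  have hcover : {p : K[X] | ∀ x, IsAlgebraic ℚ x → IsAlgebraic ℚ (p.eval x)} ⊆ ⋃ n, T n :=
    fun p hp => Set.mem_iUnion.mpr ⟨p.natDegree, le_rfl, fun i => hp _ (isAlgebraic_natCast _)⟩
  refine Set.Countable.mono hcover (Set.countable_iUnion fun n => ?_)
  let values (p : K[X]) (i : Fin (n + 1)) : K := p.eval (i : K)
  have hmaps : Set.MapsTo values (T n) (Set.univ.pi fun _ => {x : K | IsAlgebraic ℚ x}) :=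
    fun p hp i _ => hp.2 i
  have hinj : Set.InjOn values (T n) := by
    intro p hp q hq hpq
    have hdeg {r : K[X]} (hr : r.natDegree ≤ n) :
        r.degree < (Finset.univ : Finset (Fin (n + 1))).card := by
      rw [Finset.card_univ, Fintype.card_fin]
      exact (degree_le_of_natDegree_le hr).trans_lt (by exact_mod_cast n.lt_succ_self)
    exact eq_of_degrees_lt_of_eval_index_eq _
      (fun i _ j _ hij => Fin.ext (Nat.cast_injective hij)) (hdeg hp.1) (hdeg hq.1)
      fun i _ => congr_fun hpq i
  exact hmaps.countable_of_injOn hinj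
    (Set.countable_univ_pi fun _ => Algebraic.countable ℚ K)

variable {K : Type*} [NormedField K]

lemma isBigO_cobounded_pow {p : K[X]} {N : ℕ} (hN : p.natDegree ≤ N) :
    (fun z => p.eval z) =O[cobounded K] (· ^ N) := by
  simp only [eval_eq_sum_range]
  refine IsBigO.fun_sum fun j hj => (IsBigO.of_bound' ?_).const_mul_left _
  filter_upwards [eventually_cobounded_le_norm 1] with z hz
  simpa only [norm_pow] using pow_le_pow_right₀ hz ((Finset.mem_range_succ_iff.mp hj).trans hN)

lemma exists_pos_eventually_le_norm_eval {p : K[X]} (hp : p ≠ 0) :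
    ∃ c > 0, ∀ᶠ z in cobounded K, c ≤ ‖p.eval z‖ := by
  rcases le_or_gt p.degree 0 with hd | hd
  · rw [eq_C_of_degree_le_zero hd] at hp ⊢
    exact ⟨‖p.coeff 0‖, by simpa using hp, by simp⟩
  · exact ⟨1, one_pos,
      (p.tendsto_norm_atTop hd tendsto_norm_cobounded_atTop).eventually_ge_atTop 1⟩

lemma IsRoot.norm_le_sum_div_add_one {p : K[X]} (hp : p ≠ 0) {a : K} (h : p.IsRoot a) :
    ‖a‖ ≤ (∑ j ∈ Finset.range p.natDegree, ‖p.coeff j‖) / ‖p.leadingCoeff‖ + 1 := by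
  have hsup : (Finset.range p.natDegree).sup (‖p.coeff ·‖₊) ≤
      ∑ j ∈ Finset.range p.natDegree, ‖p.coeff j‖₊ :=
    Finset.sup_le fun j hj => Finset.single_le_sum (f := (‖p.coeff ·‖₊)) (fun _ _ => zero_le) hj
  have key : ‖a‖₊ ≤ (∑ j ∈ Finset.range p.natDegree, ‖p.coeff j‖₊) / ‖p.leadingCoeff‖₊ + 1 :=
    (h.norm_lt_cauchyBound hp).le.trans (by unfold cauchyBound; gcongr)
  rw [← NNReal.coe_le_coe] at key
  simpa using key

lemma exists_isBigO_pow_of_evalEval_eq_zero {g : K[X][X]} (hg : g ≠ 0) {f : K → K}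
    (hf : ∀ z, g.evalEval z (f z) = 0) : ∃ N : ℕ, f =O[cobounded K] (· ^ N) := by
  obtain ⟨c, hc, hlead⟩ := exists_pos_eventually_le_norm_eval (leadingCoeff_ne_zero.mpr hg)
  set d := g.natDegree
  let N := (Finset.range d).sup fun j => (g.coeff j).natDegree
  have hroot : ∀ᶠ z in cobounded K,
      ‖f z‖ ≤ c⁻¹ * ∑ j ∈ Finset.range d, ‖(g.coeff j).eval z‖ + 1 := by
    filter_upwards [hlead] with z hz
    have hlc : g.leadingCoeff.eval z ≠ 0 := norm_pos_iff.mp (hc.trans_le hz)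
    set q := g.map (evalRingHom z)
    have hq : q.natDegree = d := natDegree_map_of_leadingCoeff_ne_zero _ hlc
    have hqlc : q.leadingCoeff = g.leadingCoeff.eval z := by
      rw [leadingCoeff, hq, coeff_map]; rfl
    have hq0 : q ≠ 0 := fun h => hlc (by rw [← hqlc, h, leadingCoeff_zero])
    have hqroot : q.IsRoot (f z) := by
      rw [IsRoot.def, map_evalRingHom_eval, hf]
    calc ‖f z‖ ≤ (∑ j ∈ Finset.range q.natDegree, ‖q.coeff j‖) / ‖q.leadingCoeff‖ + 1 :=
          hqroot.norm_le_sum_div_add_one hq0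
      _ ≤ c⁻¹ * ∑ j ∈ Finset.range d, ‖(g.coeff j).eval z‖ + 1 := by
          rw [hq, hqlc, div_eq_inv_mul]
          simp only [q, coeff_map, coe_evalRingHom]
          gcongr
  have hcoeff : ∀ j ∈ Finset.range d, (fun z => (g.coeff j).eval z) =O[cobounded K] (· ^ N) :=
    fun j hj => isBigO_cobounded_pow (Finset.le_sup (f := fun j => (g.coeff j).natDegree) hj)
  have hone : (fun _ => (1 : ℝ)) =O[cobounded K] (· ^ N) := by
    refine IsBigO.of_bound' ?_
    filter_upwards [eventually_cobounded_le_norm 1] with z hz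
    simpa [norm_pow] using one_le_pow₀ hz
  refine ⟨N, IsBigO.trans (IsBigO.of_bound' ?_)
    (((IsBigO.fun_sum fun j hj => (hcoeff j hj).norm_left).const_mul_left c⁻¹).add hone)⟩
  filter_upwards [hroot] with z hz
  exact hz.trans (le_abs_self _)

end Polynomial

lemma Differentiable.iteratedDeriv_eq_zero_of_isBigO_pow {E : Type*} [NormedAddCommGroup E]
    [NormedSpace ℂ E] [CompleteSpace E] {f : ℂ → E} (hf : Differentiable ℂ f) {N k : ℕ}
    (hfN : f =O[cobounded ℂ] (· ^ N)) (hk : N < k) : iteratedDeriv k f 0 = 0 := by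
  obtain ⟨C, hC⟩ := hfN.bound
  rw [← comap_norm_atTop, eventually_comap] at hC
  have hcauchy :
      ∀ᶠ ρ : ℝ in atTop, ‖iteratedDeriv k f 0‖ ≤ k.factorial * (C * ρ ^ N) / ρ ^ k := by
    filter_upwards [hC, eventually_gt_atTop 0] with ρ hρ hρ0
    refine Complex.norm_iteratedDeriv_le_of_forall_mem_sphere_norm_le k hρ0 hf.diffContOnCl
      fun z hz => ?_
    rw [mem_sphere_zero_iff_norm] at hz
    simpa [hz] using hρ z hz
  have hlim : Tendsto (fun ρ : ℝ => k.factorial * (C * ρ ^ N) / ρ ^ k) atTop (𝓝 0) := by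
    simpa [mul_div_assoc, mul_assoc] using
      ((tendsto_pow_div_pow_atTop_zero (𝕜 := ℝ) hk).const_mul (k.factorial * C))
  exact norm_le_zero_iff.mp (ge_of_tendsto hlim hcauchy)

lemma Differentiable.exists_polynomial_eq_of_iteratedDeriv_eq_zero {f : ℂ → ℂ}
    (hf : Differentiable ℂ f) {N : ℕ} (hN : ∀ k, N < k → iteratedDeriv k f 0 = 0) :
    ∃ p : ℂ[X], p.natDegree ≤ N ∧ (fun z => p.eval z) = f := by
  let a k := (k.factorial : ℂ)⁻¹ * iteratedDeriv k f 0
  refine ⟨∑ k ∈ Finset.range (N + 1), C (a k) * X ^ k, ?_, funext fun z => ?_⟩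
  · exact natDegree_sum_le_of_forall_le _ _ fun k hk =>
      (natDegree_C_mul_X_pow_le _ _).trans (Finset.mem_range_succ_iff.mp hk)
  · rw [← Complex.taylorSeries_eq_of_entire' 0 z hf, tsum_eq_sum (s := Finset.range (N + 1))]
    · simp [eval_finsetSum, a]
    · intro k hk
      simp [hN k (by simpa using hk)]

lemma Differentiable.exists_polynomial_eq_of_isBigO_pow {f : ℂ → ℂ} (hf : Differentiable ℂ f)
    {N : ℕ} (hfN : f =O[cobounded ℂ] (· ^ N)) :
    ∃ p : ℂ[X], p.natDegree ≤ N ∧ (fun z => p.eval z) = f :=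
  hf.exists_polynomial_eq_of_iteratedDeriv_eq_zero fun _ hk =>
    hf.iteratedDeriv_eq_zero_of_isBigO_pow hfN hk

/-- The set of algebraic entire functions mapping the algebraic numbers
into themselves is countable. -/
theorem countable_algebraic_entire_functions :
    Set.Countable {f : ℂ → ℂ |
      Differentiable ℂ f ∧
      (∃ P : MvPolynomial (Fin 2) ℂ, P ≠ 0 ∧
        ∀ z : ℂ, MvPolynomial.eval ![z, f z] P = 0) ∧
      (∀ z : ℂ, IsAlgebraic ℚ z → IsAlgebraic ℚ (f z))} := by
  refine ((countable_setOf_isAlgebraic_eval (K := ℂ)).image fun p z => p.eval z).mono ?_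
  rintro f ⟨hf, ⟨P, hP, hPf⟩, halg⟩
  set g := (Bivariate.equivMvPolynomial ℂ).symm P
  have hg : g ≠ 0 := by simpa [g] using hP
  have hgf (z : ℂ) : g.evalEval z (f z) = 0 := by
    rw [← Bivariate.eval_equivMvPolynomial, AlgEquiv.apply_symm_apply, hPf]
  obtain ⟨N, hN⟩ := exists_isBigO_pow_of_evalEval_eq_zero hg hgf
  obtain ⟨p, -, rfl⟩ := hf.exists_polynomial_eq_of_isBigO_pow hN
  exact ⟨p, halg, rfl⟩
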